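/- arXiv:math/0002212 — 4 statements merged into one kernel-verified Lean document; each statement's English description precedes it below -/
import Mathlib

section
/- For non-zero subspaces U, V, W of R^n, the maximum angle satisfies the triangle inequality: ∠_M(U,W) ≤ ∠_M(U,V) + ∠_M(V,W). -/
/-! Angles between subspaces of `ℝⁿ` (with the standard inner product).
`∠(u,v) = arccos(⟪u,v⟫/(‖u‖‖v‖))` is `InnerProductGeometry.angle`.
The angle of a non-zero vector with a non-zero subspace is the minimum (infimum)
of the angles with non-zero vectors of the subspace, and the maximum angle
`∠_M(U,V)` of a subspace `U` with respect to a subspace `V` is the maximum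
(supremum) over non-zero `u ∈ U` of `∠(u,V)`. -/

/-- The angle `∠(u,V)` of a vector with a subspace. -/
noncomputable def angleToSub {n : ℕ} (u : EuclideanSpace ℝ (Fin n))
    (V : Submodule ℝ (EuclideanSpace ℝ (Fin n))) : ℝ :=
  sInf {θ : ℝ | ∃ v ∈ V, v ≠ 0 ∧ θ = InnerProductGeometry.angle u v}

/-- The maximum angle `∠_M(U,V)` of a subspace `U` with respect to a subspace `V`. -/
noncomputable def maxAngle {n : ℕ}
    (U V : Submodule ℝ (EuclideanSpace ℝ (Fin n))) : ℝ :=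
  sSup {θ : ℝ | ∃ u ∈ U, u ≠ 0 ∧ θ = angleToSub u V}

/-! The triangle inequality for angles between vectors (`angle_le_angle_add_angle`) passes to
the infimum over `w ∈ W`, then over `v ∈ V`, and finally to the supremum over `u ∈ U`. -/

open InnerProductGeometry

section AngleToSub

variable {n : ℕ} {U V W : Submodule ℝ (EuclideanSpace ℝ (Fin n))}
  {u v : EuclideanSpace ℝ (Fin n)}

theorem angleToSub_le_angle (hv : v ∈ V) (hv0 : v ≠ 0) : angleToSub u V ≤ angle u v :=
  csInf_le ⟨0, by rintro θ ⟨w, -, -, rfl⟩; exact angle_nonneg u w⟩ ⟨v, hv, hv0, rfl⟩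

theorem le_angleToSub (hV : V ≠ ⊥) {θ : ℝ} (h : ∀ v ∈ V, v ≠ 0 → θ ≤ angle u v) :
    θ ≤ angleToSub u V := by
  obtain ⟨v, hv, hv0⟩ := Submodule.exists_mem_ne_zero_of_ne_bot hV
  refine le_csInf ⟨_, v, hv, hv0, rfl⟩ ?_
  rintro _ ⟨w, hw, hw0, rfl⟩
  exact h w hw hw0

theorem angleToSub_le_pi (hV : V ≠ ⊥) : angleToSub u V ≤ Real.pi := by
  obtain ⟨v, hv, hv0⟩ := Submodule.exists_mem_ne_zero_of_ne_bot hV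
  exact (angleToSub_le_angle hv hv0).trans (angle_le_pi u v)

theorem angleToSub_le_maxAngle (hV : V ≠ ⊥) (hu : u ∈ U) (hu0 : u ≠ 0) :
    angleToSub u V ≤ maxAngle U V :=
  le_csSup ⟨Real.pi, by rintro θ ⟨w, -, -, rfl⟩; exact angleToSub_le_pi hV⟩ ⟨u, hu, hu0, rfl⟩

theorem maxAngle_le (hU : U ≠ ⊥) {θ : ℝ} (h : ∀ u ∈ U, u ≠ 0 → angleToSub u V ≤ θ) :
    maxAngle U V ≤ θ := by
  obtain ⟨u, hu, hu0⟩ := Submodule.exists_mem_ne_zero_of_ne_bot hU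
  refine csSup_le ⟨_, u, hu, hu0, rfl⟩ ?_
  rintro _ ⟨w, hw, hw0, rfl⟩
  exact h w hw hw0

theorem angleToSub_le_angle_add_angleToSub (hW : W ≠ ⊥) (u v : EuclideanSpace ℝ (Fin n)) :
    angleToSub u W ≤ angle u v + angleToSub v W := by
  rw [← sub_le_iff_le_add']
  exact le_angleToSub hW fun w hw hw0 => sub_le_iff_le_add'.mpr <|
    (angleToSub_le_angle hw hw0).trans (angle_le_angle_add_angle u v w)

theorem angleToSub_le_angleToSub_add_maxAngle (hV : V ≠ ⊥) (hW : W ≠ ⊥)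
    (u : EuclideanSpace ℝ (Fin n)) : angleToSub u W ≤ angleToSub u V + maxAngle V W := by
  rw [← sub_le_iff_le_add]
  exact le_angleToSub hV fun v hv hv0 => sub_le_iff_le_add.mpr <|
    (angleToSub_le_angle_add_angleToSub hW u v).trans
      (add_le_add_right (angleToSub_le_maxAngle hW hv hv0) _)

end AngleToSub

/-- For non-zero subspaces `U, V, W` of `ℝⁿ`, the maximum angle satisfies
the triangle inequality `∠_M(U,W) ≤ ∠_M(U,V) + ∠_M(V,W)`. -/
theorem maxAngle_triangle {n : ℕ} (U V W : Submodule ℝ (EuclideanSpace ℝ (Fin n)))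
    (hU : U ≠ ⊥) (hV : V ≠ ⊥) (hW : W ≠ ⊥) :
    maxAngle U W ≤ maxAngle U V + maxAngle V W :=
  maxAngle_le hU fun u hu hu0 =>
    (angleToSub_le_angleToSub_add_maxAngle hV hW u).trans
      (add_le_add_left (angleToSub_le_maxAngle hV hu hu0) _)
end

section
/- If U and V are subspaces of R^n of the same dimension, then the maximum angle is symmetric: ∠_M(U,V) = ∠_M(V,U). -/
/-
The angle of `u ≠ 0` with `V ≠ ⊥` is `arccos (‖P_V u‖ / ‖u‖)`, attained at `P_V u`. Hence
`∠_M(U,V) = arccos m`, where `m` is the least stretch `min_{‖x‖ = 1} ‖T x‖` of the compression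
`T = P_V|_U : U → V`, whose adjoint is `P_U|_V`. When `dim U = dim V`, a map and its adjoint have
the same least stretch: if `m ‖x‖ ≤ ‖T x‖` with `m > 0` then `T` is onto, and for `y = T x`,
`‖y‖² = ⟪x, T† y⟫ ≤ ‖x‖ ‖T† y‖ ≤ ‖y‖ ‖T† y‖ / m`.
-/

open Module ContinuousLinearMap InnerProductGeometry
open scoped InnerProduct RealInnerProductSpace

theorem ContinuousLinearMap.mul_norm_le_norm_adjoint_apply {E F : Type*}
    [NormedAddCommGroup E] [InnerProductSpace ℝ E] [FiniteDimensional ℝ E]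
    [NormedAddCommGroup F] [InnerProductSpace ℝ F] [FiniteDimensional ℝ F]
    {T : E →L[ℝ] F} (hrank : finrank ℝ E = finrank ℝ F) {m : ℝ}
    (hm : ∀ x, m * ‖x‖ ≤ ‖T x‖) (y : F) : m * ‖y‖ ≤ ‖(T†) y‖ := by
  rcases le_or_gt m 0 with hm0 | hm0
  · exact (mul_nonpos_of_nonpos_of_nonneg hm0 (norm_nonneg y)).trans (norm_nonneg _)
  have hinj : Function.Injective T := by
    refine (injective_iff_map_eq_zero T).mpr fun x hx => norm_eq_zero.mp ?_
    have := hm x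
    rw [hx, norm_zero] at this
    exact le_antisymm (nonpos_of_mul_nonpos_right this hm0) (norm_nonneg x)
  obtain ⟨x, rfl⟩ : ∃ x, T x = y :=
    (LinearMap.injective_iff_surjective_of_finrank_eq_finrank hrank).mp hinj y
  have hsq : ‖T x‖ * ‖T x‖ ≤ ‖x‖ * ‖(T†) (T x)‖ :=
    calc ‖T x‖ * ‖T x‖ = ⟪x, (T†) (T x)⟫ := by
          rw [adjoint_inner_right, real_inner_self_eq_norm_mul_norm]
      _ ≤ ‖x‖ * ‖(T†) (T x)‖ := real_inner_le_norm _ _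
  rcases (norm_nonneg (T x)).eq_or_lt with h0 | hpos
  · rw [← h0, mul_zero]; exact norm_nonneg _
  refine le_of_mul_le_mul_left ?_ hpos
  calc ‖T x‖ * (m * ‖T x‖) = m * (‖T x‖ * ‖T x‖) := by ring
    _ ≤ m * (‖x‖ * ‖(T†) (T x)‖) := by gcongr
    _ ≤ ‖T x‖ * ‖(T†) (T x)‖ := by rw [← mul_assoc]; gcongr; exact hm x

theorem ContinuousLinearMap.exists_norm_eq_one_forall_norm_apply_mul_le {𝕜 E F : Type*} [RCLike 𝕜]
    [NormedAddCommGroup E] [NormedSpace 𝕜 E] [FiniteDimensional 𝕜 E] [Nontrivial E]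
    [SeminormedAddCommGroup F] [NormedSpace 𝕜 F] (T : E →L[𝕜] F) :
    ∃ x, ‖x‖ = 1 ∧ ∀ y, ‖T x‖ * ‖y‖ ≤ ‖T y‖ := by
  have := FiniteDimensional.proper_rclike 𝕜 E
  obtain ⟨x, hx, hmin⟩ := (isCompact_sphere (0 : E) 1).exists_isMinOn
    (Set.nonempty_coe_sort.mp (NormedSpace.sphere_nonempty_rclike 𝕜 zero_le_one))
    (continuous_norm.comp T.continuous).continuousOn
  refine ⟨x, by simpa using hx, fun y => ?_⟩
  rcases eq_or_ne y 0 with rfl | hy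
  · simp
  have hy' : ‖y‖ ≠ 0 := norm_ne_zero_iff.mpr hy
  have : ‖T x‖ ≤ ‖T ((‖y‖⁻¹ : 𝕜) • y)‖ := hmin (by simp [norm_smul, hy'])
  simp only [map_smul, norm_smul, norm_inv, RCLike.norm_ofReal, abs_norm] at this
  rwa [← le_div_iff₀ (by positivity), div_eq_inv_mul]

namespace Submodule

variable {𝕜 E : Type*} [RCLike 𝕜] [NormedAddCommGroup E] [InnerProductSpace 𝕜 E]

noncomputable def projRestrict (U V : Submodule 𝕜 E) [V.HasOrthogonalProjection] : U →L[𝕜] V :=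
  V.orthogonalProjectionOnto ∘L U.subtypeL

theorem adjoint_projRestrict (U V : Submodule 𝕜 E) [CompleteSpace U] [CompleteSpace V] :
    (U.projRestrict V)† = V.projRestrict U := by
  symm
  rw [eq_adjoint_iff]
  intro v u
  simp [projRestrict]

theorem coe_projRestrict_apply (U V : Submodule 𝕜 E) [V.HasOrthogonalProjection] (x : U) :
    (U.projRestrict V x : E) = V.starProjection x :=
  rfl

end Submodule

section Euclidean

variable {n : ℕ}

theorem angleToSub_eq_arccos {u : EuclideanSpace ℝ (Fin n)} (hu : u ≠ 0)
    {V : Submodule ℝ (EuclideanSpace ℝ (Fin n))} (hV : V ≠ ⊥) :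
    angleToSub u V = Real.arccos (‖V.starProjection u‖ / ‖u‖) := by
  have hinner : ∀ v ∈ V, ⟪u, v⟫ = ⟪V.starProjection u, v⟫ := fun v hv => by
    rw [V.inner_starProjection_left_eq_right, V.starProjection_eq_self_iff.mpr hv]
  refine IsLeast.csInf_eq ⟨?_, ?_⟩
  · by_cases hP : V.starProjection u = 0
    · obtain ⟨v, hvV, hv0⟩ := Submodule.exists_mem_ne_zero_of_ne_bot hV
      refine ⟨v, hvV, hv0, ?_⟩
      rw [angle, hinner v hvV, hP, inner_zero_left, zero_div, norm_zero, zero_div]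
    · refine ⟨V.starProjection u, V.starProjection_apply_mem u, hP, ?_⟩
      rw [angle, hinner _ (V.starProjection_apply_mem u), real_inner_self_eq_norm_mul_norm,
        mul_div_mul_right _ _ (norm_ne_zero_iff.mpr hP)]
  · rintro θ ⟨v, hvV, hv0, rfl⟩
    refine Real.arccos_le_arccos ?_
    rw [hinner v hvV, div_le_div_iff₀ (by positivity) (norm_pos_iff.mpr hu)]
    calc ⟪V.starProjection u, v⟫ * ‖u‖ ≤ ‖V.starProjection u‖ * ‖v‖ * ‖u‖ := by
          gcongr; exact real_inner_le_norm _ _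
      _ = ‖V.starProjection u‖ * (‖u‖ * ‖v‖) := by ring

theorem maxAngle_eq_arccos {U V : Submodule ℝ (EuclideanSpace ℝ (Fin n))} (hV : V ≠ ⊥)
    {x₀ : U} (hx₀ : ‖x₀‖ = 1) (hmin : ∀ x, ‖U.projRestrict V x₀‖ * ‖x‖ ≤ ‖U.projRestrict V x‖) :
    maxAngle U V = Real.arccos ‖U.projRestrict V x₀‖ := by
  have hx₀' : (x₀ : EuclideanSpace ℝ (Fin n)) ≠ 0 := by
    rw [← norm_ne_zero_iff, Submodule.norm_coe, hx₀]; exact one_ne_zero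
  refine IsGreatest.csSup_eq ⟨⟨x₀, x₀.2, hx₀', ?_⟩, ?_⟩
  · rw [angleToSub_eq_arccos hx₀' hV, Submodule.norm_coe, hx₀, div_one, ← Submodule.norm_coe,
      Submodule.coe_projRestrict_apply]
  · rintro θ ⟨u, huU, hu0, rfl⟩
    rw [angleToSub_eq_arccos hu0 hV]
    refine Real.arccos_le_arccos ?_
    rw [le_div_iff₀ (norm_pos_iff.mpr hu0)]
    have := hmin ⟨u, huU⟩
    rwa [← Submodule.norm_coe (U.projRestrict V _), Submodule.coe_projRestrict_apply] at this

end Euclidean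

/-- If `U` and `V` are subspaces of `ℝⁿ` of the same dimension, then the
maximum angle is symmetric: `∠_M(U,V) = ∠_M(V,U)`. -/
theorem maxAngle_symm_of_finrank_eq {n : ℕ}
    (U V : Submodule ℝ (EuclideanSpace ℝ (Fin n)))
    (h : Module.finrank ℝ U = Module.finrank ℝ V) :
    maxAngle U V = maxAngle V U := by
  rcases eq_or_ne V ⊥ with rfl | hV
  · rw [Submodule.finrank_eq_zero.mp (h.trans (finrank_bot ℝ _))]
  have hU : U ≠ ⊥ := by
    rintro rfl
    exact hV (Submodule.finrank_eq_zero.mp (h.symm.trans (finrank_bot ℝ _)))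
  have : Nontrivial U := Submodule.nontrivial_iff_ne_bot.mpr hU
  have : Nontrivial V := Submodule.nontrivial_iff_ne_bot.mpr hV
  obtain ⟨x, hx, hxmin⟩ := (U.projRestrict V).exists_norm_eq_one_forall_norm_apply_mul_le
  obtain ⟨y, hy, hymin⟩ := (V.projRestrict U).exists_norm_eq_one_forall_norm_apply_mul_le
  have hxy : ‖U.projRestrict V x‖ ≤ ‖V.projRestrict U y‖ := by
    simpa [hy, U.adjoint_projRestrict V] using mul_norm_le_norm_adjoint_apply h hxmin y
  have hyx : ‖V.projRestrict U y‖ ≤ ‖U.projRestrict V x‖ := by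
    simpa [hx, V.adjoint_projRestrict U] using mul_norm_le_norm_adjoint_apply h.symm hymin x
  rw [maxAngle_eq_arccos hV hx hxmin, maxAngle_eq_arccos hU hy hymin, hxy.antisymm hyx]
end

section
/- For non-zero subspaces U and V of R^n, the minimum angle between U and V equals the minimum angle between any non-zero vector of U^⊥ and any non-zero vector of V^⊥: ∠_m(U,V) = min over non-zero u ∈ U^⊥, non-zero v ∈ V^⊥ of ∠(u,v). -/
open scoped Classical

/-- The minimum angle `∠_m(U,V)` between two subspaces. -/
noncomputable def minAngle {n : ℕ}
    (U V : Submodule ℝ (EuclideanSpace ℝ (Fin n))) : ℝ :=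
  if U ⊔ V = ⊤ then
    sInf {θ : ℝ | ∃ u ∈ U ⊓ (U ⊓ V)ᗮ, u ≠ 0 ∧ θ = angleToSub u (V ⊓ (U ⊓ V)ᗮ)}
  else 0


/-!
If unit vectors `x ∈ A`, `y ∈ B` realise the minimal angle between subspaces with `A ∩ B = 0`,
and `c = ⟪x, y⟫`, maximality forces the projections of `y` onto `A` and of `x` onto `B` to be
`c • x` and `c • y`. Hence `c • x - y ⊥ A` and `x - c • y ⊥ B`; both lie in `A + B`, and they
again make the angle `arccos c`.

In the transversal case apply this to `A = U_c`, `B = V_c`: the two new vectors lie in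
`U_cᗮ ∩ Wᗮ = Uᗮ` and `Vᗮ`, so `∠(Uᗮ, Vᗮ) ≤ ∠_m(U, V)`. Applied to `A = Uᗮ`, `B = Vᗮ` (disjoint
since `U + V = ℝⁿ`) it gives vectors in `U ∩ Wᗮ = U_c` and `V_c`, which is the reverse inequality.
If `U + V ≠ ℝⁿ`, a common non-zero vector of `Uᗮ` and `Vᗮ` makes both sides `0`.
-/

open InnerProductGeometry
open scoped RealInnerProductSpace

namespace Submodule

section OrthogonalComplementInside

variable {𝕜 F : Type*} [RCLike 𝕜] [NormedAddCommGroup F] [InnerProductSpace 𝕜 F]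
  {W U : Submodule 𝕜 F} [W.HasOrthogonalProjection]

theorem sup_inf_orthogonal_eq (h : W ≤ U) : W ⊔ U ⊓ Wᗮ = U := by
  rw [inf_comm]
  exact sup_orthogonal_inf_of_hasOrthogonalProjection h

theorem orthogonal_inf_orthogonal_inf_eq (h : W ≤ U) : Wᗮ ⊓ (U ⊓ Wᗮ)ᗮ = Uᗮ := by
  rw [inf_orthogonal, sup_inf_orthogonal_eq h]

theorem inf_orthogonal_ne_bot (h : W ≤ U) (hUW : ¬U ≤ W) : U ⊓ Wᗮ ≠ ⊥ := fun hbot ↦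
  hUW (by rw [← sup_inf_orthogonal_eq h, hbot, sup_bot_eq])

end OrthogonalComplementInside

variable {E : Type*} [NormedAddCommGroup E] [InnerProductSpace ℝ E]

noncomputable def infAngle (A B : Submodule ℝ E) : ℝ :=
  sInf {θ : ℝ | ∃ u ∈ A, u ≠ 0 ∧ ∃ v ∈ B, v ≠ 0 ∧ θ = angle u v}

@[simp]
theorem infAngle_bot_left (B : Submodule ℝ E) : infAngle ⊥ B = 0 := by
  simp [infAngle]

@[simp]
theorem infAngle_bot_right (A : Submodule ℝ E) : infAngle A ⊥ = 0 := by
  simp [infAngle]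

theorem infAngle_eq_zero_of_inf_ne_bot {A B : Submodule ℝ E} (h : A ⊓ B ≠ ⊥) :
    infAngle A B = 0 := by
  obtain ⟨w, ⟨hwA, hwB⟩, hw⟩ := exists_mem_ne_zero_of_ne_bot h
  refine IsLeast.csInf_eq ⟨⟨w, hwA, hw, w, hwB, hw, (angle_self hw).symm⟩, ?_⟩
  rintro θ ⟨u, -, -, v, -, -, rfl⟩
  exact angle_nonneg u v

/-- Unit vectors `x ∈ A`, `y ∈ B` at minimal angle. The maximality of the cosine `⟪x, y⟫` is
stated without dividing by `‖u‖ * ‖v‖`, so that it holds trivially at `u = 0` or `v = 0`. -/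
structure IsMinAnglePair (A B : Submodule ℝ E) (x y : E) : Prop where
  left_mem : x ∈ A
  right_mem : y ∈ B
  norm_left : ‖x‖ = 1
  norm_right : ‖y‖ = 1
  inner_le : ∀ u ∈ A, ∀ v ∈ B, ⟪u, v⟫ ≤ ⟪x, y⟫ * (‖u‖ * ‖v‖)

namespace IsMinAnglePair

variable {A B : Submodule ℝ E} {x y : E}

theorem symm (h : IsMinAnglePair A B x y) : IsMinAnglePair B A y x where
  left_mem := h.right_mem
  right_mem := h.left_mem
  norm_left := h.norm_right
  norm_right := h.norm_left
  inner_le u hu v hv := by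
    rw [real_inner_comm x y, real_inner_comm v u, mul_comm ‖u‖]
    exact h.inner_le v hv u hu

theorem left_ne_zero (h : IsMinAnglePair A B x y) : x ≠ 0 :=
  norm_ne_zero_iff.mp (h.norm_left ▸ one_ne_zero)

theorem right_ne_zero (h : IsMinAnglePair A B x y) : y ≠ 0 :=
  h.symm.left_ne_zero

theorem angle_eq_arccos (h : IsMinAnglePair A B x y) : angle x y = Real.arccos ⟪x, y⟫ := by
  rw [angle, h.norm_left, h.norm_right, mul_one, div_one]

theorem angle_le (h : IsMinAnglePair A B x y) {u v : E} (hu : u ∈ A) (hu0 : u ≠ 0)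
    (hv : v ∈ B) (hv0 : v ≠ 0) : angle x y ≤ angle u v := by
  rw [h.angle_eq_arccos, angle]
  refine Real.arccos_le_arccos ((div_le_iff₀ ?_).mpr (h.inner_le u hu v hv))
  positivity

theorem infAngle_eq (h : IsMinAnglePair A B x y) : infAngle A B = angle x y := by
  refine IsLeast.csInf_eq
    ⟨⟨x, h.left_mem, h.left_ne_zero, y, h.right_mem, h.right_ne_zero, rfl⟩, ?_⟩
  rintro θ ⟨u, hu, hu0, v, hv, hv0, rfl⟩
  exact h.angle_le hu hu0 hv hv0

theorem inner_nonneg (h : IsMinAnglePair A B x y) : 0 ≤ ⟪x, y⟫ := by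
  have := h.inner_le (-x) (neg_mem h.left_mem) y h.right_mem
  rw [inner_neg_left, norm_neg, h.norm_left, h.norm_right] at this
  linarith

theorem inner_lt_one (h : IsMinAnglePair A B x y) (hAB : A ⊓ B = ⊥) : ⟪x, y⟫ < 1 := by
  refine lt_of_le_of_ne ?_ fun h1 ↦ h.left_ne_zero ?_
  · simpa [h.norm_left, h.norm_right] using real_inner_le_norm x y
  · have hxy := inner_eq_norm_mul_iff_real.mp (by rw [h1, h.norm_left, h.norm_right, one_mul])
    rw [h.norm_left, h.norm_right, one_smul, one_smul] at hxy
    rw [← mem_bot ℝ, ← hAB]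
    exact ⟨h.left_mem, hxy ▸ h.right_mem⟩

theorem starProjection_eq (h : IsMinAnglePair A B x y) [A.HasOrthogonalProjection] :
    A.starProjection y = ⟪x, y⟫ • x := by
  set p := A.starProjection y
  have hpA : p ∈ A := A.starProjection_apply_mem y
  have hxp : ⟪x, p⟫ = ⟪x, y⟫ := by
    have := A.starProjection_inner_eq_zero y x h.left_mem
    rw [inner_sub_left] at this
    linarith [real_inner_comm x p, real_inner_comm x y]
  have hpy : ⟪p, y⟫ = ‖p‖ ^ 2 := by
    have := A.starProjection_inner_eq_zero y p hpA
    rw [inner_sub_left] at this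
    linarith [real_inner_comm p y, real_inner_self_eq_norm_sq p]
  -- testing maximality against `p` itself: `‖p‖ ≤ ⟪x, y⟫ = ⟪x, p⟫ ≤ ‖p‖`, the equality case
  -- of Cauchy–Schwarz
  have hle : ‖p‖ ^ 2 ≤ ⟪x, y⟫ * ‖p‖ := by
    simpa [hpy, h.norm_right] using h.inner_le p hpA y h.right_mem
  have hge : ⟪x, y⟫ ≤ ‖p‖ := by
    simpa [hxp, h.norm_left] using real_inner_le_norm x p
  have hnorm : ‖p‖ = ⟪x, y⟫ := by nlinarith [norm_nonneg p, h.inner_nonneg]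
  have hCS : ⟪x, p⟫ = ‖x‖ * ‖p‖ := by rw [hxp, h.norm_left, one_mul, hnorm]
  have := inner_eq_norm_mul_iff_real.mp hCS
  rwa [hnorm, h.norm_left, one_smul, eq_comm] at this

theorem exists_orthogonal_pair (h : IsMinAnglePair A B x y) [A.HasOrthogonalProjection]
    [B.HasOrthogonalProjection] (hAB : A ⊓ B = ⊥) :
    ∃ a ∈ Aᗮ ⊓ (A ⊔ B), a ≠ 0 ∧ ∃ b ∈ Bᗮ ⊓ (A ⊔ B), b ≠ 0 ∧ angle a b = angle x y := by
  set c := ⟪x, y⟫ with hc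
  have hxx : ⟪x, x⟫ = 1 := by rw [real_inner_self_eq_norm_sq, h.norm_left, one_pow]
  have hyy : ⟪y, y⟫ = 1 := by rw [real_inner_self_eq_norm_sq, h.norm_right, one_pow]
  have hyx : ⟪y, x⟫ = c := real_inner_comm x y
  have ha : c • x - y ∈ Aᗮ := by
    have := neg_mem (A.sub_starProjection_mem_orthogonal y)
    rwa [neg_sub, h.starProjection_eq] at this
  have hb : x - c • y ∈ Bᗮ := by
    have := B.sub_starProjection_mem_orthogonal x
    rwa [h.symm.starProjection_eq, hyx] at this
  obtain ⟨hab, haa, hbb⟩ : ⟪c • x - y, x - c • y⟫ = c * (1 - c ^ 2) ∧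
      ‖c • x - y‖ ^ 2 = 1 - c ^ 2 ∧ ‖x - c • y‖ ^ 2 = 1 - c ^ 2 := by
    refine ⟨?_, ?_, ?_⟩ <;>
    · simp only [← real_inner_self_eq_norm_sq, inner_sub_left, inner_sub_right,
        real_inner_smul_left, real_inner_smul_right, hxx, hyy, hyx, ← hc]
      ring
  have hpos : 0 < 1 - c ^ 2 := by nlinarith [h.inner_nonneg, h.inner_lt_one hAB]
  have hnorms : ‖c • x - y‖ * ‖x - c • y‖ = 1 - c ^ 2 := by
    have hab_norm : ‖c • x - y‖ = ‖x - c • y‖ :=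
      (pow_left_inj₀ (norm_nonneg _) (norm_nonneg _) two_ne_zero).mp (haa.trans hbb.symm)
    rw [← haa, hab_norm, sq]
  refine ⟨c • x - y, ⟨ha, sub_mem (mem_sup_left (smul_mem _ c h.left_mem))
      (mem_sup_right h.right_mem)⟩, ?_, x - c • y, ⟨hb, sub_mem (mem_sup_left h.left_mem)
      (mem_sup_right (smul_mem _ c h.right_mem))⟩, ?_, ?_⟩
  · rw [← norm_ne_zero_iff, ← pow_ne_zero_iff two_ne_zero, haa]; exact hpos.ne'
  · rw [← norm_ne_zero_iff, ← pow_ne_zero_iff two_ne_zero, hbb]; exact hpos.ne'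
  · rw [angle, hab, hnorms, mul_div_cancel_right₀ _ hpos.ne', h.angle_eq_arccos]

end IsMinAnglePair

theorem exists_isMinAnglePair [FiniteDimensional ℝ E] {A B : Submodule ℝ E} (hA : A ≠ ⊥)
    (hB : B ≠ ⊥) : ∃ x y, IsMinAnglePair A B x y := by
  let S (C : Submodule ℝ E) : Set E := C ∩ Metric.sphere 0 1
  have normalize_mem {C : Submodule ℝ E} {u : E} (hu : u ∈ C) (hu0 : u ≠ 0) :
      ‖u‖⁻¹ • u ∈ S C :=
    ⟨smul_mem _ _ hu, mem_sphere_zero_iff_norm.mpr (norm_smul_inv_norm (𝕜 := ℝ) hu0)⟩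
  have S_nonempty {C : Submodule ℝ E} (hC : C ≠ ⊥) : (S C).Nonempty := by
    obtain ⟨u, hu, hu0⟩ := exists_mem_ne_zero_of_ne_bot hC
    exact ⟨_, normalize_mem hu hu0⟩
  have S_compact (C : Submodule ℝ E) : IsCompact (S C) :=
    (isCompact_sphere 0 1).inter_left C.closed_of_finiteDimensional
  obtain ⟨⟨x, y⟩, ⟨⟨hxA, hx⟩, ⟨hyB, hy⟩⟩, hmax⟩ :=
    ((S_compact A).prod (S_compact B)).exists_isMaxOn ((S_nonempty hA).prod (S_nonempty hB))
      (continuous_inner (𝕜 := ℝ) (E := E)).continuousOn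
  rw [mem_sphere_zero_iff_norm] at hx hy
  refine ⟨x, y, hxA, hyB, hx, hy, fun u hu v hv ↦ ?_⟩
  rcases eq_or_ne u 0 with rfl | hu0
  · simp
  rcases eq_or_ne v 0 with rfl | hv0
  · simp
  have hle : ⟪‖u‖⁻¹ • u, ‖v‖⁻¹ • v⟫ ≤ ⟪x, y⟫ :=
    hmax (a := (‖u‖⁻¹ • u, ‖v‖⁻¹ • v)) ⟨normalize_mem hu hu0, normalize_mem hv hv0⟩
  rwa [real_inner_smul_left, real_inner_smul_right, ← mul_assoc, ← mul_inv,
    inv_mul_le_iff₀ (by positivity), mul_comm] at hle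

theorem infAngle_inf_orthogonal_eq_infAngle_orthogonal [FiniteDimensional ℝ E]
    {U V : Submodule ℝ E} (hT : U ⊔ V = ⊤) :
    infAngle (U ⊓ (U ⊓ V)ᗮ) (V ⊓ (U ⊓ V)ᗮ) = infAngle Uᗮ Vᗮ := by
  set W := U ⊓ V
  by_cases hUV : U ≤ V
  · have hV : V = ⊤ := by rwa [sup_eq_right.mpr hUV] at hT
    rw [show W = U from inf_eq_left.mpr hUV, inf_orthogonal_eq_bot, hV, top_orthogonal_eq_bot,
      infAngle_bot_left, infAngle_bot_right]
  by_cases hVU : V ≤ U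
  · have hU : U = ⊤ := by rwa [sup_eq_left.mpr hVU] at hT
    rw [show W = V from inf_eq_right.mpr hVU, inf_orthogonal_eq_bot, hU, top_orthogonal_eq_bot,
      infAngle_bot_right, infAngle_bot_left]
  have hUc : U ⊓ Wᗮ ≠ ⊥ := inf_orthogonal_ne_bot inf_le_left fun h ↦ hUV (h.trans inf_le_right)
  have hVc : V ⊓ Wᗮ ≠ ⊥ := inf_orthogonal_ne_bot inf_le_right fun h ↦ hVU (h.trans inf_le_left)
  have hUo : Uᗮ ≠ ⊥ := fun h ↦ hVU (orthogonal_eq_bot_iff.mp h ▸ le_top)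
  have hVo : Vᗮ ≠ ⊥ := fun h ↦ hUV (orthogonal_eq_bot_iff.mp h ▸ le_top)
  obtain ⟨x, y, hxy⟩ := exists_isMinAnglePair hUc hVc
  obtain ⟨x', y', hxy'⟩ := exists_isMinAnglePair hUo hVo
  rw [hxy.infAngle_eq, hxy'.infAngle_eq]
  apply le_antisymm
  · have horth : Uᗮ ⊓ Vᗮ = ⊥ := by rw [inf_orthogonal, hT, top_orthogonal_eq_bot]
    obtain ⟨a, ⟨haU, haS⟩, ha0, b, ⟨hbV, hbS⟩, hb0, hab⟩ := hxy'.exists_orthogonal_pair horth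
    rw [orthogonal_orthogonal] at haU hbV
    have hS : Uᗮ ⊔ Vᗮ ≤ Wᗮ := sup_le (orthogonal_le inf_le_left) (orthogonal_le inf_le_right)
    exact hab ▸ hxy.angle_le ⟨haU, hS haS⟩ ha0 ⟨hbV, hS hbS⟩ hb0
  · have hcompl : U ⊓ Wᗮ ⊓ (V ⊓ Wᗮ) = ⊥ := by
      rw [eq_bot_iff, ← W.inf_orthogonal_eq_bot]
      rintro z ⟨⟨hzU, hzW⟩, hzV, -⟩
      exact ⟨⟨hzU, hzV⟩, hzW⟩
    obtain ⟨a, ⟨haU, haS⟩, ha0, b, ⟨hbV, hbS⟩, hb0, hab⟩ := hxy.exists_orthogonal_pair hcompl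
    have hS : U ⊓ Wᗮ ⊔ V ⊓ Wᗮ ≤ Wᗮ := sup_le inf_le_right inf_le_right
    have ha : a ∈ Uᗮ := orthogonal_inf_orthogonal_inf_eq (W := W) inf_le_left ▸ ⟨hS haS, haU⟩
    have hb : b ∈ Vᗮ := orthogonal_inf_orthogonal_inf_eq (W := W) inf_le_right ▸ ⟨hS hbS, hbV⟩
    exact hab ▸ hxy'.angle_le ha ha0 hb hb0

end Submodule

section EuclideanSpace

open Submodule

variable {n : ℕ}

theorem Submodule.IsMinAnglePair.sInf_angleToSub_eq {A B : Submodule ℝ (EuclideanSpace ℝ (Fin n))}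
    {x y : EuclideanSpace ℝ (Fin n)} (h : IsMinAnglePair A B x y) :
    sInf {θ : ℝ | ∃ u ∈ A, u ≠ 0 ∧ θ = angleToSub u B} = angle x y := by
  have hle {u} (hu : u ∈ A) (hu0 : u ≠ 0) : angle x y ≤ angleToSub u B :=
    le_csInf ⟨_, y, h.right_mem, h.right_ne_zero, rfl⟩ fun _ ⟨_, hv, hv0, hθ⟩ ↦
      hθ ▸ h.angle_le hu hu0 hv hv0
  have hx : angleToSub x B ≤ angle x y :=
    csInf_le ⟨0, fun _ ⟨v, _, _, hθ⟩ ↦ hθ ▸ angle_nonneg x v⟩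
      ⟨y, h.right_mem, h.right_ne_zero, rfl⟩
  refine IsLeast.csInf_eq ⟨⟨x, h.left_mem, h.left_ne_zero,
    (hx.antisymm (hle h.left_mem h.left_ne_zero)).symm⟩, ?_⟩
  rintro θ ⟨u, hu, hu0, rfl⟩
  exact hle hu hu0

theorem sInf_angleToSub_eq_infAngle (A B : Submodule ℝ (EuclideanSpace ℝ (Fin n))) :
    sInf {θ : ℝ | ∃ u ∈ A, u ≠ 0 ∧ θ = angleToSub u B} = A.infAngle B := by
  rcases eq_or_ne A ⊥ with rfl | hA
  · simp
  rcases eq_or_ne B ⊥ with rfl | hB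
  · have : {θ : ℝ | ∃ u ∈ A, u ≠ 0 ∧ θ = angleToSub u ⊥} ⊆ {0} := by
      rintro θ ⟨u, -, -, rfl⟩
      simp [angleToSub]
    rcases Set.subset_singleton_iff_eq.mp this with h | h <;> simp [h]
  obtain ⟨x, y, h⟩ := exists_isMinAnglePair hA hB
  rw [h.sInf_angleToSub_eq, h.infAngle_eq]

end EuclideanSpace

theorem minAngle_eq_inf_angle_orthogonal_general {n : ℕ}
    (U V : Submodule ℝ (EuclideanSpace ℝ (Fin n))) :
    minAngle U V =
      sInf {θ : ℝ | ∃ u ∈ Uᗮ, u ≠ 0 ∧ ∃ v ∈ Vᗮ, v ≠ 0 ∧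
        θ = InnerProductGeometry.angle u v} := by
  change minAngle U V = Uᗮ.infAngle Vᗮ
  rw [minAngle]
  split_ifs with hT
  · rw [sInf_angleToSub_eq_infAngle, Submodule.infAngle_inf_orthogonal_eq_infAngle_orthogonal hT]
  · refine (Submodule.infAngle_eq_zero_of_inf_ne_bot ?_).symm
    rwa [Submodule.inf_orthogonal, Ne, Submodule.orthogonal_eq_bot_iff]

/-- For non-zero subspaces `U` and `V` of `ℝⁿ`, the minimum angle between
`U` and `V` equals the minimum of the angles between non-zero vectors of `U^⊥` and
non-zero vectors of `V^⊥`. -/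
theorem minAngle_eq_inf_angle_orthogonal {n : ℕ}
    (U V : Submodule ℝ (EuclideanSpace ℝ (Fin n))) (hU : U ≠ ⊥) (hV : V ≠ ⊥) :
    minAngle U V =
      sInf {θ : ℝ | ∃ u ∈ Uᗮ, u ≠ 0 ∧ ∃ v ∈ Vᗮ, v ≠ 0 ∧
        θ = InnerProductGeometry.angle u v} :=
  minAngle_eq_inf_angle_orthogonal_general U V
end

section
/- Let V, W be complex vector spaces of dimensions m and n with m ≥ n. If φ₀, φ₁: V → W are surjective linear maps with Λ^n φ₀ = Λ^n φ₁, then ker φ₀ = ker φ₁, there exists A ∈ SL(W) with A∘φ₀ = φ₁, and consequently φ₀ and φ₁ are joined by a continuous path φ_t of surjective maps with Λ^n φ_t = Λ^n φ₀ for all t. -/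
open ExteriorAlgebra

/-- The `n`-th exterior power `⋀ⁿ f : ⋀ⁿ M → ⋀ⁿ N` of a linear map `f : M → N`,
determined by `(⋀ⁿ f)(v₁∧⋯∧vₙ) = f(v₁)∧⋯∧f(vₙ)`. -/
noncomputable def extPowMap {R M N : Type*} [CommRing R] [AddCommGroup M] [Module R M]
    [AddCommGroup N] [Module R N] (n : ℕ) (f : M →ₗ[R] N) :
    ⋀[R]^n M →ₗ[R] ⋀[R]^n N :=
  (ExteriorAlgebra.map f).toLinearMap.restrict (p := ⋀[R]^n M) (q := ⋀[R]^n N)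
    (fun x hx => by
      have hpow : ∀ k : ℕ, (Submodule.map (ι R) (LinearMap.range f)) ^ k ≤
          (LinearMap.range (ι R (M := N))) ^ k := by
        intro k
        induction k with
        | zero => exact le_rfl
        | succ k ih =>
            rw [pow_succ, pow_succ]
            exact mul_le_mul' ih (LinearMap.map_le_range)
      have hle : Submodule.map (ExteriorAlgebra.map f).toLinearMap (⋀[R]^n M) ≤ ⋀[R]^n N := by
        rw [show (⋀[R]^n M) = (LinearMap.range (ι R (M := M))) ^ n from rfl,
          Submodule.map_pow, ExteriorAlgebra.ι_range_map_map]
        exact hpow n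
      exact hle (Submodule.mem_map_of_mem hx))

/-!
If `⋀ⁿφ₀ = ⋀ⁿφ₁` and `v ∈ ker φ₀` had `φ₁ v ≠ 0`, completing `φ₁ v` to a basis of `W` and lifting
that basis through `φ₁` (with `v` as the lift of `φ₁ v`) would give `n` vectors whose wedge is killed
by `⋀ⁿφ₀` but not by `⋀ⁿφ₁`. So the kernels agree and `φ₁ = A ∘ φ₀` for some `A : W → W`; then
`⋀ⁿφ₁ = det A • ⋀ⁿφ₀` with `⋀ⁿφ₀ ≠ 0` forces `det A = 1`, and a path `B` from `1` to `A` in `SL(W)`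
gives the path `B t ∘ φ₀`.

`SL(n, ℂ)` is path connected: `det (1 + z (A - 1))` is a nonzero polynomial in `z`, so a path from
`0` to `1` in `ℂ` can avoid its roots, and rescaling one column of `1 + z (A - 1)` by the inverse
determinant moves the resulting path into `SL(n, ℂ)`.
-/

open Module Function LinearMap

theorem extPowMap_eq_exteriorPower_map {R M N : Type*} [CommRing R] [AddCommGroup M] [Module R M]
    [AddCommGroup N] [Module R N] (n : ℕ) (f : M →ₗ[R] N) :
    extPowMap n f = exteriorPower.map n f := by
  refine exteriorPower.linearMap_ext (AlternatingMap.ext fun v => Subtype.ext ?_)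
  simp only [compAlternatingMap_apply, exteriorPower.map_apply_ιMulti,
    exteriorPower.ιMulti_apply_coe]
  exact ExteriorAlgebra.map_apply_ιMulti f v

theorem LinearMap.exists_comp_eq_of_ker_le {R M N P : Type*} [Ring R] [AddCommGroup M]
    [Module R M] [AddCommGroup N] [Module R N] [AddCommGroup P] [Module R P]
    {f : M →ₗ[R] N} {g : M →ₗ[R] P} (hf : Surjective f) (h : ker f ≤ ker g) :
    ∃ A : N →ₗ[R] P, A ∘ₗ f = g :=
  ⟨(ker f).liftQ g h ∘ₗ (f.quotKerEquivOfSurjective hf).symm.toLinearMap, by ext; simp⟩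

theorem AlternatingMap.apply_eq_basis_det_smul {R M N ι : Type*} [CommRing R] [AddCommGroup M]
    [Module R M] [AddCommGroup N] [Module R N] [Fintype ι] [DecidableEq ι]
    (e : Basis ι R M) (f : M [⋀^ι]→ₗ[R] N) (v : ι → M) : f v = e.det v • f e := by
  suffices f = e.det.smulRight (f e) from congr($this v)
  refine e.ext_alternating fun σ hσ => ?_
  let σ' : Equiv.Perm ι := Equiv.ofBijective σ (Finite.injective_iff_bijective.1 hσ)
  change f (e ∘ σ') = e.det (e ∘ σ') • f e
  rw [f.map_perm, e.det.map_perm, e.det_self, Units.smul_def, Units.smul_def,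
    smul_one_smul]

theorem Module.exists_basis_fin_apply_eq {K W : Type*} [Field K] [AddCommGroup W] [Module K W]
    [FiniteDimensional K W] {n : ℕ} (hn : finrank K W = n) {w : W} (hw : w ≠ 0) :
    ∃ (b : Basis (Fin n) K W) (k : Fin n), b k = w := by
  have hw' : LinearIndepOn K id {w} := (linearIndepOn_singleton_iff K).2 hw
  let b := Basis.extend hw'
  let σ := b.indexEquiv (finBasisOfFinrankEq K W hn)
  refine ⟨b.reindex σ, σ ⟨w, hw'.subset_extend _ rfl⟩, ?_⟩
  simp [b]

namespace exteriorPower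

section CommRing

variable {R M : Type*} [CommRing R] [AddCommGroup M] [Module R M] {n : ℕ}

theorem ιMulti_basis_ne_zero [Nontrivial R] (b : Basis (Fin n) R M) : ιMulti R n b ≠ 0 := by
  intro h
  have := congr(alternatingMapLinearEquiv b.det $h)
  rw [alternatingMapLinearEquiv_apply_ιMulti, map_zero, b.det_self] at this
  exact one_ne_zero this

theorem map_eq_det_smul_id [Nontrivial R] [Free R M] [Module.Finite R M] (hn : finrank R M = n)
    (T : M →ₗ[R] M) : map n T = LinearMap.det T • LinearMap.id := by
  let b := finBasisOfFinrankEq R M hn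
  refine linearMap_ext (AlternatingMap.ext fun v => ?_)
  simp only [compAlternatingMap_apply, map_apply_ιMulti, LinearMap.smul_apply, id_apply]
  rw [AlternatingMap.apply_eq_basis_det_smul b, AlternatingMap.apply_eq_basis_det_smul b _ v,
    b.det_comp, mul_smul]

theorem map_comp_eq_det_smul {V : Type*} [AddCommGroup V] [Module R V] [Nontrivial R] [Free R M]
    [Module.Finite R M] (hn : finrank R M = n) (T : M →ₗ[R] M) (f : V →ₗ[R] M) :
    map n (T ∘ₗ f) = LinearMap.det T • map n f := by
  rw [map_comp, map_eq_det_smul_id hn, smul_comp, LinearMap.id_comp]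

end CommRing

section Field

variable {K V W : Type*} [Field K] [AddCommGroup V] [Module K V] [AddCommGroup W] [Module K W]
  [FiniteDimensional K W] {n : ℕ}

theorem det_eq_one_of_map_comp_eq (hn : finrank K W = n) {T : W →ₗ[K] W}
    {f : V →ₗ[K] W} (hf : Surjective f) (h : map n (T ∘ₗ f) = map n f) : LinearMap.det T = 1 := by
  let b := finBasisOfFinrankEq K W hn
  obtain ⟨x, hx⟩ := map_surjective (n := n) hf (ιMulti K n b)
  have : LinearMap.det T • ιMulti K n b = ιMulti K n b := by
    rw [← hx, ← LinearMap.smul_apply, ← map_comp_eq_det_smul hn, h]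
  simpa using smul_left_injective K (ιMulti_basis_ne_zero b) (this.trans (one_smul K _).symm)

theorem ker_le_ker_of_map_eq (hn : finrank K W = n) {φ ψ : V →ₗ[K] W}
    (hψ : Surjective ψ) (h : map n φ = map n ψ) : ker φ ≤ ker ψ := by
  intro v hv
  by_contra hψv
  obtain ⟨b, k, hk⟩ := exists_basis_fin_apply_eq hn hψv
  let u := update (surjInv hψ ∘ b) k v
  have hψu : ψ ∘ u = b := by
    funext j
    rcases eq_or_ne j k with rfl | hj
    · simp [u, hk]
    · simp [u, hj, surjInv_eq hψ]
  have hφu : ιMulti K n (φ ∘ u) = 0 := (ιMulti K n).map_coord_zero k (by simpa [u] using hv)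
  apply ιMulti_basis_ne_zero b
  rw [← hψu, ← map_apply_ιMulti, ← h, map_apply_ιMulti, hφu]

end Field

end exteriorPower

namespace Matrix

variable {ι : Type*} [Fintype ι] [DecidableEq ι]

open Polynomial in
theorem finite_setOf_det_one_add_smul_eq_zero {K : Type*} [CommRing K] [IsDomain K]
    (M : Matrix ι ι K) : {z : K | det (1 + z • M) = 0}.Finite := by
  let p : K[X] := det (1 + (X : K[X]) • M.map C)
  have hp : ∀ z, p.eval z = det (1 + z • M) := by
    intro z
    rw [← coe_evalRingHom, RingHom.map_det]
    congr 1
    ext i j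
    by_cases hij : i = j <;> simp [hij] <;> ring
  have hp0 : p ≠ 0 := fun h => by simpa [h] using hp 0
  exact (finite_setOfPred_isRoot hp0).subset fun z hz => by simpa [IsRoot, hp] using hz

theorem det_mul_diagonal_mulSingle_inv {K : Type*} [Field K] {M : Matrix ι ι K} (hM : det M ≠ 0)
    (i : ι) : det (M * diagonal (Pi.mulSingle i (det M)⁻¹)) = 1 := by
  rw [det_mul, det_diagonal, Fintype.prod_pi_mulSingle', mul_inv_cancel₀ hM]

namespace SpecialLinearGroup

theorem joined_one (A : SpecialLinearGroup ι ℂ) : Joined 1 A := by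
  rcases isEmpty_or_nonempty ι with hι | ⟨⟨i⟩⟩
  · rw [Subsingleton.elim A 1]
  let L : ℂ → Matrix ι ι ℂ := fun z => 1 + z • ((A : Matrix ι ι ℂ) - 1)
  have hS : IsPathConnected {z | det (L z) = 0}ᶜ :=
    (finite_setOf_det_one_add_smul_eq_zero _).countable.isPathConnected_compl_of_one_lt_rank
      (by rw [Complex.rank_real_complex]; norm_num)
  have hγ := hS.joinedIn 0 (by simp [L]) 1 (by simp [L])
  let γ := hγ.somePath
  let N : ℂ → Matrix ι ι ℂ := fun z => L z * diagonal (Pi.mulSingle i (det (L z))⁻¹)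
  have hN : Continuous fun t => N (γ t) := by
    have hL : Continuous fun t => L (γ t) := by fun_prop
    refine hL.matrix_mul (Continuous.matrix_diagonal ?_)
    exact continuous_mulSingle i |>.comp (hL.matrix_det.inv₀ fun t => hγ.somePath_mem t)
  exact ⟨{
    toFun t := ⟨N (γ t), det_mul_diagonal_mulSingle_inv (hγ.somePath_mem t) i⟩
    continuous_toFun := hN.subtype_mk _
    source' := by ext : 1; simp [N, L]
    target' := by ext : 1; simp [N, L] }⟩

instance : PathConnectedSpace (SpecialLinearGroup ι ℂ) where
  nonempty := ⟨1⟩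
  joined A B := (joined_one A).symm.trans (joined_one B)

end SpecialLinearGroup

end Matrix

theorem LinearMap.exists_path_of_det_eq_one {ι : Type*} [Fintype ι] [DecidableEq ι]
    (A : (ι → ℂ) →ₗ[ℂ] (ι → ℂ)) (hA : LinearMap.det A = 1) :
    ∃ B : ℝ → ((ι → ℂ) →ₗ[ℂ] (ι → ℂ)), B 0 = LinearMap.id ∧ B 1 = A ∧
      (∀ w, Continuous fun t => B t w) ∧ ∀ t, LinearMap.det (B t) = 1 := by
  let γ := PathConnectedSpace.somePath (1 : Matrix.SpecialLinearGroup ι ℂ)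
    ⟨LinearMap.toMatrix' A, by rwa [LinearMap.det_toMatrix']⟩
  refine ⟨fun t => Matrix.toLin' (γ.extend t : Matrix ι ι ℂ), by simp [γ.extend_zero],
    by simp [γ.extend_one], fun w => ?_, fun t => by simp⟩
  simp only [Matrix.toLin'_apply]
  exact (continuous_subtype_val.comp γ.continuous_extend).matrix_mulVec continuous_const

theorem exteriorPower_fibre_connected_general (m n : ℕ)
    (φ₀ φ₁ : (Fin m → ℂ) →ₗ[ℂ] (Fin n → ℂ))
    (h0 : Function.Surjective φ₀) (h1 : Function.Surjective φ₁)
    (heq : extPowMap n φ₀ = extPowMap n φ₁) :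
    LinearMap.ker φ₀ = LinearMap.ker φ₁ ∧
    (∃ A : (Fin n → ℂ) →ₗ[ℂ] (Fin n → ℂ), LinearMap.det A = 1 ∧ A.comp φ₀ = φ₁) ∧
    ∃ ψ : ℝ → ((Fin m → ℂ) →ₗ[ℂ] (Fin n → ℂ)),
      ψ 0 = φ₀ ∧ ψ 1 = φ₁ ∧ (∀ v, Continuous fun t => ψ t v) ∧
      ∀ t : ℝ, Function.Surjective (ψ t) ∧ extPowMap n (ψ t) = extPowMap n φ₀ := by
  simp only [extPowMap_eq_exteriorPower_map] at heq ⊢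
  have hn : finrank ℂ (Fin n → ℂ) = n := finrank_fin_fun ℂ
  have hker : ker φ₀ = ker φ₁ :=
    le_antisymm (exteriorPower.ker_le_ker_of_map_eq hn h1 heq)
      (exteriorPower.ker_le_ker_of_map_eq hn h0 heq.symm)
  obtain ⟨A, hA⟩ := exists_comp_eq_of_ker_le h0 hker.le
  have hdet : LinearMap.det A = 1 := exteriorPower.det_eq_one_of_map_comp_eq hn h0 (hA ▸ heq.symm)
  obtain ⟨B, hB0, hB1, hBcont, hBdet⟩ := exists_path_of_det_eq_one A hdet
  refine ⟨hker, ⟨A, hdet, hA⟩, fun t => B t ∘ₗ φ₀, by simp [hB0], by simp [hB1, hA],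
    fun v => hBcont (φ₀ v), fun t => ⟨?_, ?_⟩⟩
  · have hBt : IsUnit (B t) := (isUnit_iff_isUnit_det _).2 (by simp [hBdet t])
    exact (Module.End.isUnit_iff _ |>.1 hBt).surjective.comp h0
  · rw [exteriorPower.map_comp_eq_det_smul hn, hBdet, one_smul]

/-- Let `V = ℂᵐ`, `W = ℂⁿ` with `m ≥ n`.  If `φ₀, φ₁ : V → W` are
surjective linear maps with `⋀ⁿφ₀ = ⋀ⁿφ₁`, then `ker φ₀ = ker φ₁`, there exists
`A ∈ SL(W)` (an endomorphism of determinant one) with `A∘φ₀ = φ₁`, and consequently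
`φ₀` and `φ₁` are joined by a continuous path `φ_t` of surjective maps with
`⋀ⁿφ_t = ⋀ⁿφ₀` for all `t`. -/
theorem exteriorPower_fibre_connected (m n : ℕ) (hmn : n ≤ m)
    (φ₀ φ₁ : (Fin m → ℂ) →ₗ[ℂ] (Fin n → ℂ))
    (h0 : Function.Surjective φ₀) (h1 : Function.Surjective φ₁)
    (heq : extPowMap n φ₀ = extPowMap n φ₁) :
    LinearMap.ker φ₀ = LinearMap.ker φ₁ ∧
    (∃ A : (Fin n → ℂ) →ₗ[ℂ] (Fin n → ℂ), LinearMap.det A = 1 ∧ A.comp φ₀ = φ₁) ∧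
    ∃ ψ : ℝ → ((Fin m → ℂ) →ₗ[ℂ] (Fin n → ℂ)),
      ψ 0 = φ₀ ∧ ψ 1 = φ₁ ∧ (∀ v, Continuous fun t => ψ t v) ∧
      ∀ t : ℝ, Function.Surjective (ψ t) ∧ extPowMap n (ψ t) = extPowMap n φ₀ :=
  exteriorPower_fibre_connected_general m n φ₀ φ₁ h0 h1 heq
end
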